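/- Multi-window polarization condition: let g^1,...,g^J, γ^1,...,γ^J ∈ C^N satisfy Σ_{j=1}^J ( |ĝ^j(0) + γ̂^j(0)|² − N μ² ‖ĝ^j − γ̂^j‖_2² ) > 0, where μ = max_{ℓ,n} |χ_ℓ(n)|. Then Σ_{j=1}^J ⟨T_i g^j, T_i γ^j⟩ ≠ 0 for every vertex i. -/

import Mathlib

/-!
In the eigenbasis, `T_i` acts diagonally: `Re ⟨T_i g, T_i γ⟩ = Σ_ℓ w_ℓ Re (ĝ(ℓ) conj γ̂(ℓ))` with
weights `w_ℓ = N |χ_ℓ(i)|²`. By polarization, four times this is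
`Σ w_ℓ |ĝ(ℓ) + γ̂(ℓ)|² - Σ w_ℓ |ĝ(ℓ) - γ̂(ℓ)|²`. Since `|χ_0(i)| = 1/√N` we have `w_0 = 1`,
which bounds the first sum below by `|ĝ(0) + γ̂(0)|²`, while `w_ℓ ≤ N μ²` bounds the
second above. Summed over the windows, the hypothesis makes `Re Σ_j ⟨T_i g^j, T_i γ^j⟩` positive.
-/

open Finset

noncomputable def gft {N : ℕ} (χ : Fin N → Fin N → ℂ) (f : Fin N → ℂ) (ℓ : Fin N) : ℂ :=
  ∑ i, f i * starRingEnd ℂ (χ ℓ i)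

noncomputable def gtrans {N : ℕ} (χ : Fin N → Fin N → ℂ) (n : Fin N) (f : Fin N → ℂ)
    (i : Fin N) : ℂ :=
  ((Real.sqrt N : ℝ) : ℂ) * ∑ ℓ, gft χ f ℓ * starRingEnd ℂ (χ ℓ n) * χ ℓ i

noncomputable def ip {N : ℕ} (f g : Fin N → ℂ) : ℂ :=
  ∑ i, f i * starRingEnd ℂ (g i)

noncomputable def nrm {N : ℕ} (f : Fin N → ℂ) : ℝ :=
  Real.sqrt (∑ i, ‖(f i)‖ ^ 2)

def IsONB {N : ℕ} (χ : Fin N → Fin N → ℂ) : Prop :=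
  ∀ ℓ ℓ' : Fin N, (∑ i, χ ℓ i * starRingEnd ℂ (χ ℓ' i)) = if ℓ = ℓ' then 1 else 0

noncomputable def atom {N : ℕ} (χ : Fin N → Fin N → ℂ) (g : Fin N → ℂ) (n k i : Fin N) : ℂ :=
  (N : ℂ) * χ k i * ∑ ℓ, gft χ g ℓ * starRingEnd ℂ (χ ℓ n) * χ ℓ i

lemma IsONB.ip_sum_mul {N : ℕ} {χ : Fin N → Fin N → ℂ} (hχ : IsONB χ) (u v : Fin N → ℂ) :
    ip (fun i => ∑ ℓ, u ℓ * χ ℓ i) (fun i => ∑ ℓ, v ℓ * χ ℓ i) =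
      ∑ ℓ, u ℓ * starRingEnd ℂ (v ℓ) := by
  calc ip (fun i => ∑ ℓ, u ℓ * χ ℓ i) (fun i => ∑ ℓ, v ℓ * χ ℓ i)
      = ∑ ℓ, ∑ ℓ', ∑ i, u ℓ * starRingEnd ℂ (v ℓ') * (χ ℓ i * starRingEnd ℂ (χ ℓ' i)) := by
        simp only [ip, map_sum, map_mul, sum_mul_sum]
        rw [sum_comm]
        refine sum_congr rfl fun ℓ _ => ?_
        rw [sum_comm]
        exact sum_congr rfl fun ℓ' _ => sum_congr rfl fun i _ => by ring
    _ = ∑ ℓ, u ℓ * starRingEnd ℂ (v ℓ) := by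
        simp [← mul_sum, hχ _ _]

lemma gtrans_eq_sum_mul {N : ℕ} (χ : Fin N → Fin N → ℂ) (n : Fin N) (f : Fin N → ℂ) :
    gtrans χ n f =
      fun i => ∑ ℓ, ((Real.sqrt N : ℂ) * gft χ f ℓ * starRingEnd ℂ (χ ℓ n)) * χ ℓ i := by
  ext i
  simp only [gtrans, mul_sum, mul_assoc]

lemma re_ip_gtrans {N : ℕ} {χ : Fin N → Fin N → ℂ} (hχ : IsONB χ) (n : Fin N)
    (f h : Fin N → ℂ) :
    (ip (gtrans χ n f) (gtrans χ n h)).re =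
      ∑ ℓ, N * ‖χ ℓ n‖ ^ 2 * (gft χ f ℓ * starRingEnd ℂ (gft χ h ℓ)).re := by
  rw [gtrans_eq_sum_mul, gtrans_eq_sum_mul, hχ.ip_sum_mul, Complex.re_sum]
  refine sum_congr rfl fun ℓ _ => ?_
  have hN : (Real.sqrt N : ℂ) * Real.sqrt N = (N : ℝ) := by
    rw [← Complex.ofReal_mul, Real.mul_self_sqrt (Nat.cast_nonneg N)]
  have hχn : starRingEnd ℂ (χ ℓ n) * χ ℓ n = (‖χ ℓ n‖ ^ 2 : ℝ) := by
    rw [mul_comm, Complex.mul_conj, Complex.normSq_eq_norm_sq]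
  calc _ = ((N * ‖χ ℓ n‖ ^ 2 : ℝ) * (gft χ f ℓ * starRingEnd ℂ (gft χ h ℓ))).re := by
        simp only [map_mul, Complex.conj_ofReal, Complex.conj_conj, Complex.ofReal_mul]
        rw [← hN, ← hχn]
        ring_nf
    _ = _ := Complex.re_ofReal_mul _ _

lemma four_mul_re_mul_conj (a b : ℂ) :
    4 * (a * starRingEnd ℂ b).re = ‖a + b‖ ^ 2 - ‖a - b‖ ^ 2 := by
  rw [Complex.sq_norm, Complex.sq_norm, Complex.normSq_add, Complex.normSq_sub]
  ring

lemma sq_norm_add_sub_le_four_mul_sum_re_mul_conj {ι : Type*} [Fintype ι] (w : ι → ℝ)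
    (C : ℝ) (hw : ∀ ℓ, 0 ≤ w ℓ) (hwC : ∀ ℓ, w ℓ ≤ C) (ℓ₀ : ι) (hw₀ : w ℓ₀ = 1)
    (a b : ι → ℂ) :
    ‖a ℓ₀ + b ℓ₀‖ ^ 2 - C * ∑ ℓ, ‖a ℓ - b ℓ‖ ^ 2 ≤
      4 * ∑ ℓ, w ℓ * (a ℓ * starRingEnd ℂ (b ℓ)).re := by
  have hsplit : 4 * ∑ ℓ, w ℓ * (a ℓ * starRingEnd ℂ (b ℓ)).re =
      ∑ ℓ, w ℓ * ‖a ℓ + b ℓ‖ ^ 2 - ∑ ℓ, w ℓ * ‖a ℓ - b ℓ‖ ^ 2 := by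
    rw [mul_sum, ← sum_sub_distrib]
    refine sum_congr rfl fun ℓ _ => ?_
    linear_combination w ℓ * four_mul_re_mul_conj (a ℓ) (b ℓ)
  have hplus : ‖a ℓ₀ + b ℓ₀‖ ^ 2 ≤ ∑ ℓ, w ℓ * ‖a ℓ + b ℓ‖ ^ 2 := by
    simpa [hw₀] using single_le_sum (fun ℓ _ => mul_nonneg (hw ℓ) (sq_nonneg ‖a ℓ + b ℓ‖))
      (mem_univ ℓ₀)
  have hminus : ∑ ℓ, w ℓ * ‖a ℓ - b ℓ‖ ^ 2 ≤ C * ∑ ℓ, ‖a ℓ - b ℓ‖ ^ 2 := by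
    rw [mul_sum]
    exact sum_le_sum fun ℓ _ => mul_le_mul_of_nonneg_right (hwC ℓ) (sq_nonneg _)
  linarith

lemma sq_norm_add_gft_sub_le_four_mul_re_ip_gtrans {N : ℕ} {χ : Fin N → Fin N → ℂ}
    (hχ : IsONB χ) (ℓ₀ i : Fin N) (hmod : ‖χ ℓ₀ i‖ = 1 / Real.sqrt N) {μ : ℝ}
    (hμ : ∀ ℓ, ‖χ ℓ i‖ ≤ μ) (f h : Fin N → ℂ) :
    ‖gft χ f ℓ₀ + gft χ h ℓ₀‖ ^ 2 - N * μ ^ 2 * ∑ ℓ, ‖gft χ f ℓ - gft χ h ℓ‖ ^ 2 ≤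
      4 * (ip (gtrans χ i f) (gtrans χ i h)).re := by
  have hN : (0 : ℝ) < N := by exact_mod_cast ℓ₀.pos
  rw [re_ip_gtrans hχ]
  refine sq_norm_add_sub_le_four_mul_sum_re_mul_conj _ _ (fun ℓ => by positivity)
    (fun ℓ => ?_) ℓ₀ ?_ _ _
  · gcongr
    exact hμ ℓ
  · rw [hmod, div_pow, one_pow, Real.sq_sqrt hN.le]
    field_simp

theorem stmt18_general {N J : ℕ} (hN : 0 < N) (χ : Fin N → Fin N → ℂ) (hχ : IsONB χ)
    (hmod : ∀ i, ‖(χ (⟨0, hN⟩ : Fin N) i)‖ = 1 / Real.sqrt N)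
    (μ : ℝ)
    (hμ : IsGreatest {x : ℝ | ∃ ℓ n : Fin N, x = ‖(χ ℓ n)‖} μ)
    (g γ : Fin J → Fin N → ℂ)
    (hcond : 0 < ∑ j, (‖(gft χ (g j) ⟨0, hN⟩ + gft χ (γ j) ⟨0, hN⟩)‖ ^ 2 -
      (N : ℝ) * μ ^ 2 * ∑ ℓ, ‖(gft χ (g j) ℓ - gft χ (γ j) ℓ)‖ ^ 2)) :
    ∀ i : Fin N, (∑ j, ip (gtrans χ i (g j)) (gtrans χ i (γ j))) ≠ 0 := by
  intro i hzero
  have hbound := sum_le_sum fun j (_ : j ∈ univ) =>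
    sq_norm_add_gft_sub_le_four_mul_re_ip_gtrans hχ ⟨0, hN⟩ i (hmod i)
      (fun ℓ => hμ.2 ⟨ℓ, i, rfl⟩) (g j) (γ j)
  rw [← mul_sum, ← Complex.re_sum, hzero, Complex.zero_re, mul_zero] at hbound
  linarith

theorem stmt18 {N J : ℕ} (hN : 0 < N) (χ : Fin N → Fin N → ℂ) (hχ : IsONB χ)
    (hconst : ∀ i j, χ ⟨0, hN⟩ i = χ ⟨0, hN⟩ j)
    (hmod : ∀ i, ‖(χ (⟨0, hN⟩ : Fin N) i)‖ = 1 / Real.sqrt N)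
    (μ : ℝ)
    (hμ : IsGreatest {x : ℝ | ∃ ℓ n : Fin N, x = ‖(χ ℓ n)‖} μ)
    (g γ : Fin J → Fin N → ℂ)
    (hcond : 0 < ∑ j, (‖(gft χ (g j) ⟨0, hN⟩ + gft χ (γ j) ⟨0, hN⟩)‖ ^ 2 -
      (N : ℝ) * μ ^ 2 * ∑ ℓ, ‖(gft χ (g j) ℓ - gft χ (γ j) ℓ)‖ ^ 2)) :
    ∀ i : Fin N, (∑ j, ip (gtrans χ i (g j)) (gtrans χ i (γ j))) ≠ 0 :=
  stmt18_general hN χ hχ hmod μ hμ g γ hcond
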